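/- arXiv:1105.6075 — 6 statements merged into one kernel-verified Lean document; each statement's English description precedes it below -/
import Mathlib

section
/- Let V be a finite index set, each variable v ∈ V having finite state space X_v = {0,1,...,|X_v|−1} with |X_v| ≥ 2, and let p be a strictly positive probability distribution on X_V = ∏_{v∈V} X_v. For every M ⊆ V and every x_M ∈ X_M, the marginal log-linear parameters given by the explicit formula λ_L^M(x_L) = |X_M|^{-1} ∑_{y_M ∈ X_M} log p_M(y_M) · ∏_{v∈L} (|X_v|·1[x_v = y_v] − 1) (for L ⊆ M, including L = ∅, where the empty product is 1) satisfy the decomposition identity log p_M(x_M) = ∑_{L ⊆ M} λ_L^M(x_L). -/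
open Finset

open scoped Classical

variable {V : Type} [Fintype V] [DecidableEq V]

/-- Joint state space: variable `v` takes values in `{0, …, d v + 1}`,
so each state space has size `d v + 2 ≥ 2`. -/
abbrev Config (V : Type) (d : V → ℕ) : Type := ∀ v : V, Fin (d v + 2)

/-- Marginal `p_M` of `p` on the margin `M`, as a function of a full configuration
(it depends only on the coordinates in `M`). -/
noncomputable def margin (d : V → ℕ) (p : Config V d → ℝ) (M : Finset V)
    (x : Config V d) : ℝ :=
  ∑ y : Config V d, if ∀ v ∈ M, y v = x v then p y else 0

/-- Marginal log-linear parameter `λ_L^M(x_L)`: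
`|X_M|⁻¹ ∑_{y_M ∈ X_M} log p_M(y_M) ∏_{v ∈ L} (|X_v|·1[x_v = y_v] − 1)`.
The sum over `y_M ∈ X_M` is realized by summing over full configurations `y`
that are `0` outside `M` (one representative for each `y_M`). -/
noncomputable def mll (d : V → ℕ) (p : Config V d → ℝ) (L M : Finset V)
    (x : Config V d) : ℝ :=
  (∏ v ∈ M, ((d v + 2 : ℕ) : ℝ))⁻¹ *
    ∑ y : Config V d,
      if ∀ v ∉ M, y v = 0 then
        Real.log (margin d p M y) *
          ∏ v ∈ L, (((d v + 2 : ℕ) : ℝ) * (if x v = y v then 1 else 0) - 1)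
      else 0

/-- Conditional independence `X_A ⊥ X_B | X_C [p]`:
`p_{A∪B∪C}(x) · p_C(x) = p_{A∪C}(x) · p_{B∪C}(x)` for all configurations. -/
def CondIndep (d : V → ℕ) (p : Config V d → ℝ) (A B C : Finset V) : Prop :=
  ∀ x : Config V d,
    margin d p (A ∪ B ∪ C) x * margin d p C x
      = margin d p (A ∪ C) x * margin d p (B ∪ C) x

/-- the marginal log-linear parameters given by the explicit formula satisfy
the decomposition identity `log p_M(x_M) = ∑_{L ⊆ M} λ_L^M(x_L)`. -/
theorem mll_decomposition (d : V → ℕ) (p : Config V d → ℝ)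
    (hpos : ∀ x, 0 < p x) (hsum : ∑ x, p x = 1)
    (M : Finset V) (x : Config V d) :
    Real.log (margin d p M x) = ∑ L ∈ M.powerset, mll d p L M x := by

  classical
  have hnpos : ∀ v : V, (0:ℝ) < ((d v + 2 : ℕ) : ℝ) := fun v => by positivity
  set c : ℝ := ∏ v ∈ M, ((d v + 2 : ℕ) : ℝ) with hcdef
  have hc : 0 < c := Finset.prod_pos fun v _ => hnpos v
  -- the canonical representative of x on M
  set y₀ : Config V d := fun v => if v ∈ M then x v else 0 with hy0
  have hmarg : margin d p M y₀ = margin d p M x := by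
    unfold margin
    refine Finset.sum_congr rfl fun z _ => ?_
    congr 1
    simp only [eq_iff_iff]
    constructor
    · intro h v hv; have := h v hv; simpa [hy0, if_pos hv] using this
    · intro h v hv; simp [hy0, if_pos hv, h v hv]
  unfold mll
  rw [← Finset.mul_sum, Finset.sum_comm]
  have key : ∀ y : Config V d,
      (∑ L ∈ M.powerset,
        if ∀ v ∉ M, y v = 0 then
          Real.log (margin d p M y) *
            ∏ v ∈ L, (((d v + 2 : ℕ) : ℝ) * (if x v = y v then 1 else 0) - 1)
        else 0)
      = if (∀ v ∉ M, y v = 0) ∧ (∀ v ∈ M, x v = y v) then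
          Real.log (margin d p M y) * c else 0 := by
    intro y
    by_cases hy : ∀ v ∉ M, y v = 0
    · simp only [if_pos hy, ← Finset.mul_sum]
      have hprod := Finset.prod_add
        (fun v => ((d v + 2 : ℕ) : ℝ) * (if x v = y v then 1 else 0) - 1)
        (fun _ => (1:ℝ)) M
      simp only [Finset.prod_const_one, mul_one, sub_add_cancel] at hprod
      rw [← hprod]
      by_cases hxy : ∀ v ∈ M, x v = y v
      · rw [if_pos ⟨hy, hxy⟩]
        congr 1
        rw [hcdef]
        refine Finset.prod_congr rfl fun v hv => ?_
        rw [if_pos (hxy v hv), mul_one]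
      · rw [if_neg (fun h => hxy h.2)]
        push_neg at hxy
        obtain ⟨v, hv, hne⟩ := hxy
        rw [Finset.prod_eq_zero hv (by rw [if_neg hne, mul_zero]), mul_zero]
    · simp [hy]
  simp only [key]
  rw [Fintype.sum_eq_single y₀ (fun b hb => by
    rw [if_neg]
    rintro ⟨h1, h2⟩
    exact hb (funext fun v => by
      by_cases hv : v ∈ M
      · simp [hy0, if_pos hv, (h2 v hv).symm]
      · simp [hy0, if_neg hv, h1 v hv]))]
  rw [if_pos ⟨fun v hv => by simp [hy0, if_neg hv],
      fun v hv => by simp [hy0, if_pos hv]⟩, hmarg,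
    mul_comm (Real.log _) c, ← mul_assoc, inv_mul_cancel₀ hc.ne', one_mul]
end

section
/- Let V be a finite index set with finite state spaces X_v of size at least 2, p a strictly positive probability distribution on X_V, and M ⊆ V. Suppose (μ_L)_{L ⊆ M} is any family of functions μ_L : X_L → ℝ such that log p_M(x_M) = ∑_{L ⊆ M} μ_L(x_L) for all x_M ∈ X_M, and such that for every nonempty L ⊆ M, every v ∈ L and every x_L ∈ X_L one has ∑_{x_v ∈ X_v} μ_L(x_{L∖{v}}, x_v) = 0. Then for every L ⊆ M and x_L ∈ X_L, μ_L(x_L) equals the marginal log-linear parameter λ_L^M(x_L) given by the explicit formula; in particular the family satisfying the decomposition identity and the zero-sum constraints is unique. -/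
open Finset

open scoped Classical

variable {V : Type} [Fintype V] [DecidableEq V]

set_option linter.unusedSectionVars false

lemma sum_update_zero (d : V → ℕ) (v : V) (F : Config V d → ℝ)
    (hF : ∀ y : Config V d, ∑ a : Fin (d v + 2), F (Function.update y v a) = 0) :
    ∑ y : Config V d, F y = 0 := by
  classical
  set e : Config V d ≃ _ := Equiv.piSplitAt v (fun w => Fin (d w + 2)) with he
  rw [← Equiv.sum_comp e.symm F, Fintype.sum_prod_type, Finset.sum_comm]
  have hkey : ∀ (g : ∀ j : {j // j ≠ v}, Fin (d j + 2)) (a : Fin (d v + 2)),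
      e.symm (a, g) = Function.update (e.symm (0, g)) v a := by
    intro g a
    funext j
    by_cases h : j = v
    · subst h
      simp [he, Equiv.piSplitAt, Function.update]
    · rw [Function.update_of_ne h]
      simp only [he, Equiv.piSplitAt_symm_apply, dif_neg h]
  refine Finset.sum_eq_zero fun g _ => ?_
  rw [Finset.sum_congr rfl (fun a _ => congrArg F (hkey g a))]
  exact hF _

lemma sum_indicator_free (d : V → ℕ) (T : Finset V) (z : Config V d) :
    ∑ y : Config V d, (if ∀ w ∉ T, y w = z w then (1:ℝ) else 0)
      = ∏ v ∈ T, ((d v + 2 : ℕ) : ℝ) := by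
  classical
  have key : ∀ y : Config V d, (if ∀ w ∉ T, y w = z w then (1:ℝ) else 0)
      = ∏ w : V, (if w ∈ T then 1 else if y w = z w then 1 else 0) := by
    intro y
    rw [← Finset.prod_sdiff (Finset.subset_univ T)]
    rw [Finset.prod_congr rfl (fun w hw => if_neg (Finset.mem_sdiff.mp hw).2),
        Finset.prod_congr rfl (fun w hw => if_pos hw), Finset.prod_const_one, mul_one,
        Finset.prod_boole]
    congr 1
    simp [Finset.mem_sdiff]
  simp_rw [key]
  rw [← Fintype.piFinset_univ, ← Finset.prod_univ_sum (fun _ => Finset.univ)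
    (fun w a => if w ∈ T then (1:ℝ) else if a = z w then 1 else 0)]
  rw [← Finset.prod_sdiff (Finset.subset_univ T)]
  have h1 : ∀ w ∈ Finset.univ \ T, (∑ a : Fin (d w + 2),
      if w ∈ T then (1:ℝ) else if a = z w then 1 else 0) = 1 := by
    intro w hw
    have hwT := (Finset.mem_sdiff.mp hw).2
    simp [hwT]
  have h2 : ∀ w ∈ T, (∑ a : Fin (d w + 2),
      if w ∈ T then (1:ℝ) else if a = z w then 1 else 0) = ((d w + 2 : ℕ) : ℝ) := by
    intro w hw
    simp [hw]
  rw [Finset.prod_congr rfl h1, Finset.prod_congr rfl h2, Finset.prod_const_one, one_mul]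


lemma alt_sum (K L : Finset V) (hKL : K ⊆ L) :
    ∑ S ∈ L.powerset, (if K ⊆ S then ((-1:ℝ))^((L \ S).card) else 0)
      = if K = L then 1 else 0 := by
  classical
  rw [← Finset.sum_filter]
  have hbij : ∑ S ∈ L.powerset.filter (fun S => K ⊆ S), ((-1:ℝ))^((L \ S).card)
      = ∑ T ∈ (L \ K).powerset, ((-1:ℝ))^(T.card) := by
    refine Finset.sum_nbij' (fun S => L \ S) (fun T => L \ T) ?_ ?_ ?_ ?_ ?_
    · intro S hS
      rw [Finset.mem_filter, Finset.mem_powerset] at hS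
      exact Finset.mem_powerset.mpr (Finset.sdiff_subset_sdiff (Finset.Subset.refl L) hS.2)
    · intro T hT
      rw [Finset.mem_powerset] at hT
      rw [Finset.mem_filter, Finset.mem_powerset]
      refine ⟨Finset.sdiff_subset, Finset.subset_sdiff.mpr ⟨hKL, ?_⟩⟩
      exact (Finset.sdiff_disjoint.mono_left hT).symm
    · intro S hS
      rw [Finset.mem_filter, Finset.mem_powerset] at hS
      exact Finset.sdiff_sdiff_eq_self hS.1
    · intro T hT
      rw [Finset.mem_powerset] at hT
      exact Finset.sdiff_sdiff_eq_self (hT.trans Finset.sdiff_subset)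
    · intro S _
      rfl
  rw [hbij]
  have hz : ((∑ T ∈ (L \ K).powerset, (-1:ℤ)^(T.card) : ℤ) : ℝ)
      = ∑ T ∈ (L \ K).powerset, ((-1:ℝ))^(T.card) := by push_cast; rfl
  rw [← hz, Finset.sum_powerset_neg_one_pow_card]
  have hiff : (L \ K = ∅) ↔ (K = L) := by
    rw [Finset.sdiff_eq_empty_iff_subset]
    exact ⟨fun h => Finset.Subset.antisymm hKL h, fun h => h ▸ Finset.Subset.refl L⟩
  by_cases h : K = L
  · rw [if_pos (hiff.mpr h), if_pos h]; norm_num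
  · rw [if_neg (fun he => h (hiff.mp he)), if_neg h]; norm_num

set_option linter.unusedSectionVars true

/-- uniqueness of the marginal log-linear expansion. Any family
`μ_L : X_L → ℝ` (encoded as functions of full configurations depending only on the
coordinates in `L`) satisfying the decomposition identity and the zero-sum constraints
coincides with the MLL parameters given by the explicit formula. -/
theorem mll_unique (d : V → ℕ) (p : Config V d → ℝ)
    (hpos : ∀ x, 0 < p x) (hsum : ∑ x, p x = 1)
    (M : Finset V) (μ : Finset V → Config V d → ℝ)
    (hdep : ∀ L, L ⊆ M → ∀ x y : Config V d, (∀ v ∈ L, x v = y v) → μ L x = μ L y)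
    (hdecomp : ∀ x : Config V d,
      Real.log (margin d p M x) = ∑ L ∈ M.powerset, μ L x)
    (hzero : ∀ L, L ⊆ M → L.Nonempty → ∀ v ∈ L, ∀ x : Config V d,
      ∑ a : Fin (d v + 2), μ L (Function.update x v a) = 0) :
    ∀ L, L ⊆ M → ∀ x : Config V d, μ L x = mll d p L M x := by
  intro L hL x
  classical
  have hprodpos : (0:ℝ) < ∏ v ∈ M, ((d v + 2 : ℕ) : ℝ) :=
    Finset.prod_pos fun v _ => by positivity
  have hinner : ∀ K ∈ M.powerset,
      (∑ y : Config V d, if ∀ v ∉ M, y v = 0 then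
        μ K y * ∏ v ∈ L, (((d v + 2 : ℕ) : ℝ) * (if x v = y v then 1 else 0) - 1) else 0)
      = (∏ v ∈ M, ((d v + 2 : ℕ) : ℝ)) * (if K = L then μ L x else 0) := by
    intro K hKmem
    have hK : K ⊆ M := Finset.mem_powerset.mp hKmem
    -- expand the product over L
    have hP : ∀ y : Config V d,
        (∏ v ∈ L, (((d v + 2 : ℕ) : ℝ) * (if x v = y v then 1 else 0) - 1))
        = ∑ S ∈ L.powerset,
            ((∏ v ∈ S, ((d v + 2 : ℕ) : ℝ)) * (if ∀ v ∈ S, x v = y v then 1 else 0))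
              * (-1)^((L \ S).card) := by
      intro y
      have h1 := Finset.prod_add (fun v => ((d v + 2 : ℕ) : ℝ) * (if x v = y v then 1 else 0))
        (fun _ => (-1:ℝ)) L
      simp only [sub_eq_add_neg]
      rw [h1]
      refine Finset.sum_congr rfl fun S hS => ?_
      rw [Finset.prod_const, Finset.prod_mul_distrib, Finset.prod_boole]
      congr 1
      split_ifs <;> tauto
    -- the inner sum as a function of S
    have hU : ∀ S ∈ L.powerset,
        (∑ y : Config V d, if (∀ v ∉ M, y v = 0) ∧ (∀ v ∈ S, x v = y v) then μ K y else 0)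
        = if K ⊆ S then (∏ v ∈ M \ S, ((d v + 2 : ℕ) : ℝ)) * μ K x else 0 := by
      intro S hSmem
      have hS : S ⊆ L := Finset.mem_powerset.mp hSmem
      have hSM : S ⊆ M := hS.trans hL
      by_cases hKS : K ⊆ S
      · rw [if_pos hKS]
        set z : Config V d := fun w => if w ∈ S then x w else 0 with hz
        have hcond : ∀ y : Config V d,
            ((∀ v ∉ M, y v = 0) ∧ (∀ v ∈ S, x v = y v)) ↔ (∀ w ∉ M \ S, y w = z w) := by
          intro y
          constructor
          · rintro ⟨h1, h2⟩ w hw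
            rw [Finset.mem_sdiff] at hw
            push_neg at hw
            by_cases hwS : w ∈ S
            · simp [hz, hwS, (h2 w hwS).symm]
            · have hwM : w ∉ M := by tauto
              simp [hz, hwS, h1 w hwM]
          · intro h
            constructor
            · intro w hw
              have hwn : w ∉ M \ S := by simp [Finset.mem_sdiff, hw]
              have hws : w ∉ S := fun hws => hw (hSM hws)
              have := h w hwn
              simpa [hz, hws] using this
            · intro w hw
              have hwn : w ∉ M \ S := by simp [Finset.mem_sdiff, hw]
              have := h w hwn
              simp only [hz, if_pos hw] at this
              exact this.symm
        have hval : ∀ y : Config V d,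
            (if (∀ v ∉ M, y v = 0) ∧ (∀ v ∈ S, x v = y v) then μ K y else 0)
            = μ K x * (if ∀ w ∉ M \ S, y w = z w then 1 else 0) := by
          intro y
          by_cases hc : (∀ v ∉ M, y v = 0) ∧ (∀ v ∈ S, x v = y v)
          · rw [if_pos hc, if_pos ((hcond y).mp hc), mul_one]
            exact hdep K hK y x fun v hv => (hc.2 v (hKS hv)).symm
          · rw [if_neg hc, if_neg (fun h => hc ((hcond y).mpr h)), mul_zero]
        rw [Finset.sum_congr rfl fun y _ => hval y, ← Finset.mul_sum,
            sum_indicator_free d (M \ S) z, mul_comm]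
      · rw [if_neg hKS]
        obtain ⟨v, hvK, hvS⟩ := Finset.not_subset.mp hKS
        apply sum_update_zero d v
        intro y
        have hne1 : ∀ w, w ∉ M → w ≠ v := fun w hw h => hw (h ▸ hK hvK)
        have hne2 : ∀ w, w ∈ S → w ≠ v := fun w hw h => hvS (h ▸ hw)
        by_cases hc : (∀ w ∉ M, y w = 0) ∧ (∀ w ∈ S, x w = y w)
        · have hcond : ∀ a : Fin (d v + 2),
              ((∀ w ∉ M, Function.update y v a w = 0)
                ∧ (∀ w ∈ S, x w = Function.update y v a w)) := by
            intro a
            refine ⟨fun w hw => ?_, fun w hw => ?_⟩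
            · rw [Function.update_of_ne (hne1 w hw)]; exact hc.1 w hw
            · rw [Function.update_of_ne (hne2 w hw)]; exact hc.2 w hw
          rw [Finset.sum_congr rfl fun a _ => if_pos (hcond a)]
          exact hzero K hK ⟨v, hvK⟩ v hvK y
        · have hcond : ∀ a : Fin (d v + 2),
              ¬((∀ w ∉ M, Function.update y v a w = 0)
                ∧ (∀ w ∈ S, x w = Function.update y v a w)) := by
            intro a hca
            refine hc ⟨fun w hw => ?_, fun w hw => ?_⟩
            · have := hca.1 w hw
              rwa [Function.update_of_ne (hne1 w hw)] at this
            · have := hca.2 w hw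
              rwa [Function.update_of_ne (hne2 w hw)] at this
          rw [Finset.sum_congr rfl fun a _ => if_neg (hcond a)]
          simp
    -- now compute
    calc
      (∑ y : Config V d, if ∀ v ∉ M, y v = 0 then
          μ K y * ∏ v ∈ L, (((d v + 2 : ℕ) : ℝ) * (if x v = y v then 1 else 0) - 1) else 0)
        = ∑ y : Config V d, ∑ S ∈ L.powerset,
            ((∏ v ∈ S, ((d v + 2 : ℕ) : ℝ)) * (-1)^((L \ S).card)) *
              (if (∀ v ∉ M, y v = 0) ∧ (∀ v ∈ S, x v = y v) then μ K y else 0) := by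
          refine Finset.sum_congr rfl fun y _ => ?_
          rw [hP y]
          by_cases hc : ∀ v ∉ M, y v = 0
          · rw [if_pos hc, Finset.mul_sum]
            refine Finset.sum_congr rfl fun S hS => ?_
            by_cases hind : ∀ v ∈ S, x v = y v
            · rw [if_pos hind, if_pos ⟨hc, hind⟩]; ring
            · rw [if_neg hind, if_neg (fun h => hind h.2)]; ring
          · rw [if_neg hc]
            refine (Finset.sum_eq_zero fun S hS => ?_).symm
            rw [if_neg (fun h => hc h.1), mul_zero]
      _ = ∑ S ∈ L.powerset,
            ((∏ v ∈ S, ((d v + 2 : ℕ) : ℝ)) * (-1)^((L \ S).card)) *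
              (∑ y : Config V d,
                if (∀ v ∉ M, y v = 0) ∧ (∀ v ∈ S, x v = y v) then μ K y else 0) := by
          rw [Finset.sum_comm]
          exact Finset.sum_congr rfl fun S _ => (Finset.mul_sum _ _ _).symm
      _ = ∑ S ∈ L.powerset,
            ((∏ v ∈ M, ((d v + 2 : ℕ) : ℝ)) * μ K x) *
              (if K ⊆ S then (-1:ℝ)^((L \ S).card) else 0) := by
          refine Finset.sum_congr rfl fun S hSmem => ?_
          have hSM : S ⊆ M := (Finset.mem_powerset.mp hSmem).trans hL
          rw [hU S hSmem]
          by_cases hKS : K ⊆ S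
          · rw [if_pos hKS, if_pos hKS, ← Finset.prod_sdiff hSM]
            ring
          · rw [if_neg hKS, if_neg hKS, mul_zero, mul_zero]
      _ = (∏ v ∈ M, ((d v + 2 : ℕ) : ℝ)) * (if K = L then μ L x else 0) := by
          rw [← Finset.mul_sum]
          by_cases hKL : K ⊆ L
          · rw [alt_sum K L hKL]
            by_cases hKeq : K = L
            · subst hKeq
              rw [if_pos rfl, if_pos rfl, mul_one]
            · rw [if_neg hKeq, if_neg hKeq, mul_zero, mul_zero]
          · have h0 : ∑ S ∈ L.powerset, (if K ⊆ S then ((-1:ℝ))^((L \ S).card) else 0) = 0 :=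
              Finset.sum_eq_zero fun S hSmem =>
                if_neg fun h => hKL (h.trans (Finset.mem_powerset.mp hSmem))
            have hKeq : K ≠ L := fun h => hKL (h ▸ Finset.Subset.refl K)
            rw [h0, if_neg hKeq, mul_zero, mul_zero]
  -- final assembly
  have key : (∑ y : Config V d, if ∀ v ∉ M, y v = 0 then
        Real.log (margin d p M y) *
          ∏ v ∈ L, (((d v + 2 : ℕ) : ℝ) * (if x v = y v then 1 else 0) - 1) else 0)
      = (∏ v ∈ M, ((d v + 2 : ℕ) : ℝ)) * μ L x := by
    have h1 : ∀ y : Config V d, (if ∀ v ∉ M, y v = 0 then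
        Real.log (margin d p M y) *
          ∏ v ∈ L, (((d v + 2 : ℕ) : ℝ) * (if x v = y v then 1 else 0) - 1) else 0)
        = ∑ K ∈ M.powerset, (if ∀ v ∉ M, y v = 0 then
            μ K y * ∏ v ∈ L, (((d v + 2 : ℕ) : ℝ) * (if x v = y v then 1 else 0) - 1) else 0) := by
      intro y
      by_cases hc : ∀ v ∉ M, y v = 0
      · simp only [if_pos hc, hdecomp y, Finset.sum_mul]
      · simp [if_neg hc]
    rw [Finset.sum_congr rfl fun y _ => h1 y, Finset.sum_comm,
        Finset.sum_congr rfl hinner]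
    simp only [mul_ite, mul_zero]
    rw [Finset.sum_ite_eq' M.powerset L, if_pos (Finset.mem_powerset.mpr hL)]
  unfold mll
  rw [key]
  exact (inv_mul_cancel_left₀ (ne_of_gt hprodpos) (μ L x)).symm
end

section
/- Let V be a finite index set with finite state spaces X_v of size at least 2 and p a strictly positive probability distribution on X_V. Let A, B, C be pairwise disjoint subsets of V with A and B nonempty (C may be empty). Then X_A ⊥ X_B | X_C [p] holds if and only if λ_{A'∪B'∪C'}^{A∪B∪C}(x) = 0 for every nonempty A' ⊆ A, every nonempty B' ⊆ B, every C' ⊆ C, and every x ∈ X_{A'∪B'∪C'}. -/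
/-
Put `M = A ∪ B ∪ C`. The MLL parameters `λ_L^M` are the coefficients of `log p_M` in the
basis of contrasts `∏_{v ∈ L} (|X_v|·1[x_v = y_v] − 1)`: summing them over `L ⊆ M` gives
back `log p_M`, and the coefficient `λ_L` of a function that does not depend on some
coordinate `v ∈ L` is zero, because each contrast sums to zero over its coordinate.

Conditional independence says `log p_M = log p_{A∪C} + log p_{B∪C} − log p_C`, and none of the
three terms depends on all coordinates of an `L` meeting both `A` and `B`. Conversely, if those
parameters vanish, `log p_M` is a function of `x_{A∪C}` plus a function of `x_{B∪C}`, so `p_M`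
factorizes as `h(x_{A∪C}) g(x_{B∪C})`; for such a product, swapping the `B`-coordinates of two
configurations that agree on `C` preserves the product of their probabilities, which matches the
two sides of the conditional-independence identity term by term.
-/

open Finset

open scoped Classical

variable {V : Type} [Fintype V] [DecidableEq V]

theorem eq_piecewise_zero_iff {ι : Type*} {α : ι → Type*} [∀ i, Zero (α i)] [DecidableEq ι]
    {s : Finset ι} {x y : ∀ i, α i} :
    y = s.piecewise x 0 ↔ (∀ i ∉ s, y i = 0) ∧ ∀ i ∈ s, y i = x i := by
  constructor
  · rintro rfl
    exact ⟨fun i hi => by simp [hi], fun i hi => by simp [hi]⟩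
  · rintro ⟨h0, hs⟩
    ext1 i
    by_cases hi : i ∈ s <;> simp [hi, h0, hs]

theorem DependsOn.sum {ι κ R : Type*} {α : κ → Type*} [AddCommMonoid R] {s : Set κ}
    {I : Finset ι} {f : ι → (∀ k, α k) → R} (hf : ∀ i ∈ I, DependsOn (f i) s) :
    DependsOn (fun y => ∑ i ∈ I, f i y) s :=
  fun _ _ h => Finset.sum_congr rfl fun i hi => hf i hi h

theorem mul_eq_mul_swap_of_factorization {ι R : Type*} {α : ι → Type*} [DecidableEq ι]
    [CommMonoid R] {p f g : (∀ i, α i) → R} {B C : Finset ι}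
    (hf : DependsOn f (↑B)ᶜ) (hg : DependsOn g ↑(B ∪ C)) (hp : ∀ y, p y = f y * g y)
    {y z : ∀ i, α i} (hyz : ∀ i ∈ C, y i = z i) :
    p y * p z = p (B.piecewise z y) * p (B.piecewise y z) := by
  have hf1 : f (B.piecewise z y) = f y := hf fun i hi => B.piecewise_eq_of_notMem _ _ hi
  have hf2 : f (B.piecewise y z) = f z := hf fun i hi => B.piecewise_eq_of_notMem _ _ hi
  have hg_swap : ∀ {y z : ∀ i, α i}, (∀ i ∈ C, y i = z i) → g (B.piecewise z y) = g z :=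
    fun hyz => hg fun i hi => by
      by_cases hiB : i ∈ B
      · exact B.piecewise_eq_of_mem _ _ hiB
      · rw [B.piecewise_eq_of_notMem _ _ hiB]
        exact hyz i ((Finset.mem_union.mp hi).resolve_left hiB)
  rw [hp, hp, hp, hp, hf1, hf2, hg_swap hyz, hg_swap fun i hi => (hyz i hi).symm]
  ac_rfl

noncomputable def contrast (d : V → ℕ) (x y : Config V d) (v : V) : ℝ :=
  ((d v + 2 : ℕ) : ℝ) * (if x v = y v then 1 else 0) - 1

noncomputable def interaction (d : V → ℕ) (f : Config V d → ℝ) (L M : Finset V)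
    (x : Config V d) : ℝ :=
  (∏ v ∈ M, ((d v + 2 : ℕ) : ℝ))⁻¹ *
    ∑ y ∈ univ.filter (fun y : Config V d => ∀ v ∉ M, y v = 0),
      f y * ∏ v ∈ L, contrast d x y v

section

variable {d : V → ℕ}

theorem mll_eq_interaction (p : Config V d → ℝ) (L M : Finset V) :
    mll d p L M = interaction d (fun y => Real.log (margin d p M y)) L M := by
  ext x
  rw [mll, interaction, Finset.sum_filter]
  rfl

theorem interaction_add (f g : Config V d → ℝ) (L M : Finset V) (x : Config V d) :
    interaction d (f + g) L M x = interaction d f L M x + interaction d g L M x := by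
  simp only [interaction, Pi.add_apply, add_mul, Finset.sum_add_distrib, mul_add]

theorem interaction_sub (f g : Config V d → ℝ) (L M : Finset V) (x : Config V d) :
    interaction d (f - g) L M x = interaction d f L M x - interaction d g L M x := by
  simp only [interaction, Pi.sub_apply, sub_mul, Finset.sum_sub_distrib, mul_sub]

theorem interaction_dependsOn (f : Config V d → ℝ) (L M : Finset V) :
    DependsOn (interaction d f L M) L := by
  intro x x' h
  simp only [interaction, contrast]
  congr 1
  refine Finset.sum_congr rfl fun y _ => ?_
  congr 1
  exact Finset.prod_congr rfl fun v hv => by rw [h v hv]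

theorem sum_mul_contrast_eq_zero {F : Config V d → ℝ} {w : V}
    (hF : DependsOn F ({w}ᶜ : Set V)) (x : Config V d) :
    ∑ y, F y * contrast d x y w = 0 := by
  set e := Equiv.piSplitAt w (fun v => Fin (d v + 2))
  have hF' : ∀ t r, F (e.symm (t, r)) = F (e.symm (x w, r)) := fun t r =>
    hF fun v hv => by simp [e, Equiv.piSplitAt_symm_apply, show v ≠ w from hv]
  rw [← e.symm.sum_comp, Fintype.sum_prod_type, Finset.sum_comm]
  refine Finset.sum_eq_zero fun r _ => ?_
  simp_rw [hF' _ r, ← Finset.mul_sum]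
  simp [e, contrast, Finset.sum_sub_distrib]

theorem interaction_eq_zero_of_dependsOn {f : Config V d → ℝ} {S L M : Finset V} {w : V}
    (hf : DependsOn f S) (hwL : w ∈ L) (hwM : w ∈ M) (hwS : w ∉ S) (x : Config V d) :
    interaction d f L M x = 0 := by
  set F : Config V d → ℝ := fun y =>
    if ∀ v ∉ M, y v = 0 then f y * ∏ v ∈ L.erase w, contrast d x y v else 0
  have hsplit : ∀ y, (if ∀ v ∉ M, y v = 0 then f y * ∏ v ∈ L, contrast d x y v else 0)
      = F y * contrast d x y w := by
    intro y
    simp only [F, ← Finset.mul_prod_erase L _ hwL]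
    split_ifs <;> ring
  have hF : DependsOn F ({w}ᶜ : Set V) := by
    intro y z h
    have hyz : ∀ v, v ≠ w → y v = z v := h
    simp only [F]
    refine if_congr ?_ ?_ rfl
    · exact forall₂_congr fun v hv => by rw [hyz v (ne_of_mem_of_not_mem hwM hv).symm]
    · refine congrArg₂ _ (hf fun v hv => hyz v (ne_of_mem_of_not_mem hv hwS))
        (Finset.prod_congr rfl fun v hv => ?_)
      simp [contrast, hyz v (Finset.ne_of_mem_erase hv)]
  rw [interaction, Finset.sum_filter, Finset.sum_congr rfl fun y _ => hsplit y,
    sum_mul_contrast_eq_zero hF, mul_zero]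

theorem sum_powerset_interaction {f : Config V d → ℝ} {M : Finset V} (hf : DependsOn f M)
    (x : Config V d) :
    ∑ L ∈ M.powerset, interaction d f L M x = f x := by
  have hK : (∏ v ∈ M, ((d v + 2 : ℕ) : ℝ)) ≠ 0 :=
    Finset.prod_ne_zero_iff.mpr fun v _ => by positivity
  have hreps : (univ.filter fun y : Config V d => ∀ v ∉ M, y v = 0).filter
      (fun y => ∀ v ∈ M, x v = y v) = {M.piecewise x 0} := by
    ext y
    simp only [Finset.mem_filter, Finset.mem_univ, true_and, Finset.mem_singleton,
      eq_piecewise_zero_iff, eq_comm (a := x _)]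
  have hprod : ∀ y : Config V d, ∏ v ∈ M, (contrast d x y v + 1)
      = (∏ v ∈ M, ((d v + 2 : ℕ) : ℝ)) * if ∀ v ∈ M, x v = y v then 1 else 0 := by
    intro y
    simp only [contrast, sub_add_cancel, Finset.prod_mul_distrib, Finset.prod_boole]
    split_ifs <;> rfl
  simp only [interaction, ← Finset.mul_sum]
  rw [Finset.sum_comm]
  simp only [← Finset.mul_sum, ← Finset.prod_add_one, hprod, mul_ite, mul_one, mul_zero]
  rw [← Finset.sum_filter, hreps, Finset.sum_singleton, mul_comm (f _), ← mul_assoc,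
    inv_mul_cancel₀ hK, one_mul]
  exact hf fun v hv => M.piecewise_eq_of_mem _ _ hv

theorem margin_dependsOn (p : Config V d → ℝ) (M : Finset V) : DependsOn (margin d p M) M :=
  fun x x' h => Finset.sum_congr rfl fun y _ =>
    if_congr (forall₂_congr fun v hv => by rw [h v hv]) rfl rfl

theorem margin_pos {p : Config V d → ℝ} (hpos : ∀ x, 0 < p x) (M : Finset V)
    (x : Config V d) :
    0 < margin d p M x :=
  Finset.sum_pos' (fun y _ => by split_ifs <;> simp [(hpos y).le])
    ⟨x, Finset.mem_univ x, by simp [hpos x]⟩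

theorem margin_ite_margin (p : Config V d → ℝ) {S M : Finset V} (hSM : S ⊆ M) :
    margin d (fun y => if ∀ v ∉ M, y v = 0 then margin d p M y else 0) S = margin d p S := by
  ext x
  have hcond : ∀ y z : Config V d,
      ((∀ v ∈ S, y v = x v) ∧ (∀ v ∉ M, y v = 0) ∧ ∀ v ∈ M, z v = y v)
        ↔ y = M.piecewise z 0 ∧ ∀ v ∈ S, z v = x v := by
    intro y z
    constructor
    · rintro ⟨hS, h0, hM⟩
      exact ⟨eq_piecewise_zero_iff.mpr ⟨h0, fun v hv => (hM v hv).symm⟩,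
        fun v hv => (hM v (hSM hv)).trans (hS v hv)⟩
    · rintro ⟨hy, hS⟩
      obtain ⟨h0, hM⟩ := eq_piecewise_zero_iff.mp hy
      exact ⟨fun v hv => (hM v (hSM hv)).trans (hS v hv), h0, fun v hv => (hM v hv).symm⟩
  calc margin d (fun y => if ∀ v ∉ M, y v = 0 then margin d p M y else 0) S x
      = ∑ y, ∑ z, if y = M.piecewise z 0 ∧ ∀ v ∈ S, z v = x v then p z else 0 := by
        refine Finset.sum_congr rfl fun y _ => ?_
        simp only [← hcond, margin]
        by_cases hS : ∀ v ∈ S, y v = x v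
        · by_cases h0 : ∀ v ∉ M, y v = 0
          · rw [if_pos hS, if_pos h0]
            simp only [and_iff_right hS, and_iff_right h0]
          · rw [if_pos hS, if_neg h0]
            exact (Finset.sum_eq_zero fun z _ => if_neg fun h => h0 h.2.1).symm
        · rw [if_neg hS]
          exact (Finset.sum_eq_zero fun z _ => if_neg fun h => hS h.1).symm
    _ = margin d p S x := by
        rw [Finset.sum_comm]
        simp [margin, ite_and]

theorem condIndep_congr_margin {p q : Config V d → ℝ} {A B C : Finset V}
    (h : ∀ S ⊆ A ∪ B ∪ C, margin d p S = margin d q S) :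
    CondIndep d p A B C ↔ CondIndep d q A B C := by
  have hAC : A ∪ C ⊆ A ∪ B ∪ C :=
    Finset.union_subset_union Finset.subset_union_left subset_rfl
  have hBC : B ∪ C ⊆ A ∪ B ∪ C :=
    Finset.union_subset_union Finset.subset_union_right subset_rfl
  simp only [CondIndep, h _ subset_rfl, h _ Finset.subset_union_right, h _ hAC, h _ hBC]

theorem condIndep_of_factorization {p f g : Config V d → ℝ} {A B C : Finset V}
    (hAB : Disjoint A B) (hBC : Disjoint B C)
    (hf : DependsOn f (↑B)ᶜ) (hg : DependsOn g ↑(B ∪ C)) (hp : ∀ y, p y = f y * g y) :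
    CondIndep d p A B C := by
  have hAB' : ∀ v ∈ A, v ∉ B := fun v hv => Finset.disjoint_left.mp hAB hv
  have hCB : ∀ v ∈ C, v ∉ B := fun v hv => Finset.disjoint_right.mp hBC hv
  let swapB : Config V d × Config V d → Config V d × Config V d :=
    fun q => (B.piecewise q.2 q.1, B.piecewise q.1 q.2)
  have hswap : Function.Involutive swapB := by
    intro q
    ext v <;> by_cases hv : v ∈ B <;> simp [swapB, hv]
  intro x
  simp only [margin, Fintype.sum_mul_sum, ← Fintype.sum_prod_type', ite_zero_mul_ite_zero]
  refine Fintype.sum_equiv (hswap.toPerm swapB) _ _ fun ⟨y, z⟩ => ?_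
  simp only [Function.Involutive.coe_toPerm, swapB]
  have hcond : ((∀ v ∈ A ∪ B ∪ C, y v = x v) ∧ ∀ v ∈ C, z v = x v) ↔
      (∀ v ∈ A ∪ C, B.piecewise z y v = x v) ∧
        ∀ v ∈ B ∪ C, B.piecewise y z v = x v := by
    have e1 : (∀ v ∈ A, B.piecewise z y v = x v) ↔ ∀ v ∈ A, y v = x v :=
      forall₂_congr fun v hv => by rw [B.piecewise_eq_of_notMem _ _ (hAB' v hv)]
    have e2 : (∀ v ∈ C, B.piecewise z y v = x v) ↔ ∀ v ∈ C, y v = x v :=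
      forall₂_congr fun v hv => by rw [B.piecewise_eq_of_notMem _ _ (hCB v hv)]
    have e3 : (∀ v ∈ B, B.piecewise y z v = x v) ↔ ∀ v ∈ B, y v = x v :=
      forall₂_congr fun v hv => by rw [B.piecewise_eq_of_mem _ _ hv]
    have e4 : (∀ v ∈ C, B.piecewise y z v = x v) ↔ ∀ v ∈ C, z v = x v :=
      forall₂_congr fun v hv => by rw [B.piecewise_eq_of_notMem _ _ (hCB v hv)]
    simp only [Finset.forall_mem_union, e1, e2, e3, e4]
    tauto
  refine if_ctx_congr hcond (fun h => ?_) fun _ => rfl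
  obtain ⟨hy, hz⟩ := hcond.mpr h
  exact mul_eq_mul_swap_of_factorization hf hg hp fun v hv =>
    (hy v (Finset.mem_union_right _ hv)).trans (hz v hv).symm

theorem mll_dependsOn (p : Config V d → ℝ) (L M : Finset V) : DependsOn (mll d p L M) L :=
  mll_eq_interaction p L M ▸ interaction_dependsOn _ L M

theorem log_margin_dependsOn (p : Config V d → ℝ) (M : Finset V) :
    DependsOn (fun y => Real.log (margin d p M y)) M :=
  fun _ _ h => congrArg Real.log (margin_dependsOn p M h)

theorem mll_eq_zero_of_condIndep {p : Config V d → ℝ} (hpos : ∀ x, 0 < p x)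
    {A B C : Finset V}
    (hAB : Disjoint A B) (hAC : Disjoint A C) (hBC : Disjoint B C)
    (hCI : CondIndep d p A B C) {L : Finset V} (hLA : ¬Disjoint L A) (hLB : ¬Disjoint L B)
    (x : Config V d) :
    mll d p L (A ∪ B ∪ C) x = 0 := by
  obtain ⟨a, haL, haA⟩ := Finset.not_disjoint_iff.mp hLA
  obtain ⟨b, hbL, hbB⟩ := Finset.not_disjoint_iff.mp hLB
  have haM : a ∈ A ∪ B ∪ C := by simp [haA]
  have hbM : b ∈ A ∪ B ∪ C := by simp [hbB]
  have haC : a ∉ C := Finset.disjoint_left.mp hAC haA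
  have haBC : a ∉ B ∪ C := by simp [Finset.disjoint_left.mp hAB haA, haC]
  have hbAC : b ∉ A ∪ C := by
    simp [Finset.disjoint_right.mp hAB hbB, Finset.disjoint_left.mp hBC hbB]
  have hlog : (fun y => Real.log (margin d p (A ∪ B ∪ C) y))
      = (fun y => Real.log (margin d p (A ∪ C) y)) + (fun y => Real.log (margin d p (B ∪ C) y))
        - fun y => Real.log (margin d p C y) := by
    funext y
    have h := congrArg Real.log (hCI y)
    simp only [Real.log_mul (margin_pos hpos _ y).ne' (margin_pos hpos _ y).ne'] at h
    simp only [Pi.add_apply, Pi.sub_apply]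
    linarith
  rw [mll_eq_interaction, hlog, interaction_sub, interaction_add,
    interaction_eq_zero_of_dependsOn (log_margin_dependsOn p _) hbL hbM hbAC,
    interaction_eq_zero_of_dependsOn (log_margin_dependsOn p _) haL haM haBC,
    interaction_eq_zero_of_dependsOn (log_margin_dependsOn p _) haL haM haC,
    add_zero, sub_zero]

theorem condIndep_of_mll_eq_zero {p : Config V d → ℝ} (hpos : ∀ x, 0 < p x)
    {A B C : Finset V}
    (hAB : Disjoint A B) (hBC : Disjoint B C)
    (h : ∀ L ⊆ A ∪ B ∪ C, ¬Disjoint L A → ¬Disjoint L B →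
      ∀ x, mll d p L (A ∪ B ∪ C) x = 0) :
    CondIndep d p A B C := by
  set M := A ∪ B ∪ C
  -- Only margins inside `M` enter, so `p` may be replaced by `p_M` put on the representatives.
  rw [condIndep_congr_margin fun S hS => (margin_ite_margin p hS).symm]
  refine condIndep_of_factorization hAB hBC
    (f := fun y => (if ∀ v ∉ M, y v = 0 then 1 else 0) *
      Real.exp (∑ L ∈ M.powerset.filter (Disjoint · B), mll d p L M y))
    (g := fun y => Real.exp (∑ L ∈ M.powerset.filter (¬Disjoint · B), mll d p L M y))
    ?_ ?_ fun y => ?_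
  · intro y z hyz
    refine congrArg₂ _ (if_congr (forall₂_congr fun v hv => ?_) rfl rfl)
      (congrArg Real.exp (DependsOn.sum (fun L hL => ?_) hyz))
    · rw [hyz v fun hvB => hv (Finset.mem_union_left _ (Finset.mem_union_right _ hvB))]
    · refine (mll_dependsOn p L M).mono ?_
      exact Set.subset_compl_iff_disjoint_right.mpr
        (Finset.disjoint_coe.mpr (Finset.mem_filter.mp hL).2)
  · intro y z hyz
    refine congrArg Real.exp (DependsOn.sum (fun L hL => ?_) hyz)
    obtain ⟨hLM, hLB⟩ := Finset.mem_filter.mp hL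
    by_cases hLA : Disjoint L A
    · have hL : L ⊆ A ∪ (B ∪ C) := Finset.union_assoc A B C ▸ Finset.mem_powerset.mp hLM
      exact (mll_dependsOn p L M).mono (Finset.coe_subset.mpr (hLA.left_le_of_le_sup_left hL))
    · have hzero := h L (Finset.mem_powerset.mp hLM) hLA hLB
      exact fun y' z' _ => by rw [hzero y', hzero z']
  · by_cases hy : ∀ v ∉ M, y v = 0
    · have hlog := sum_powerset_interaction (log_margin_dependsOn p M) y
      simp only [← mll_eq_interaction] at hlog
      rw [if_pos hy, if_pos hy, one_mul, ← Real.exp_add, Finset.sum_filter_add_sum_filter_not,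
        hlog, Real.exp_log (margin_pos hpos M y)]
    · rw [if_neg hy, if_neg hy, zero_mul, zero_mul]

end

theorem condIndep_iff_mll_zero_general (d : V → ℕ) (p : Config V d → ℝ)
    (hpos : ∀ x, 0 < p x)
    (A B C : Finset V)
    (hAB : Disjoint A B) (hAC : Disjoint A C) (hBC : Disjoint B C) :
    CondIndep d p A B C ↔
      ∀ A' B' C' : Finset V, A' ⊆ A → B' ⊆ B → C' ⊆ C →
        A'.Nonempty → B'.Nonempty →
        ∀ x : Config V d, mll d p (A' ∪ B' ∪ C') (A ∪ B ∪ C) x = 0 := by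
  constructor
  · rintro hCI A' B' C' hA' hB' - ⟨a, ha⟩ ⟨b, hb⟩ x
    exact mll_eq_zero_of_condIndep hpos hAB hAC hBC hCI
      (Finset.not_disjoint_iff.mpr ⟨a, by simp [ha], hA' ha⟩)
      (Finset.not_disjoint_iff.mpr ⟨b, by simp [hb], hB' hb⟩) x
  · refine fun h => condIndep_of_mll_eq_zero hpos hAB hBC fun L hL hLA hLB x => ?_
    have hsplit : L ∩ A ∪ L ∩ B ∪ L ∩ C = L := by
      rw [← Finset.inter_union_distrib_left, ← Finset.inter_union_distrib_left,
        Finset.inter_eq_left.mpr hL]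
    simpa only [hsplit] using h (L ∩ A) (L ∩ B) (L ∩ C) Finset.inter_subset_right
      Finset.inter_subset_right Finset.inter_subset_right
      (Finset.not_disjoint_iff_nonempty_inter.mp hLA)
      (Finset.not_disjoint_iff_nonempty_inter.mp hLB) x

/-- `X_A ⊥ X_B | X_C [p]` holds iff `λ_{A'∪B'∪C'}^{A∪B∪C} = 0` for all
nonempty `A' ⊆ A`, nonempty `B' ⊆ B` and `C' ⊆ C`. -/
theorem condIndep_iff_mll_zero (d : V → ℕ) (p : Config V d → ℝ)
    (hpos : ∀ x, 0 < p x) (hsum : ∑ x, p x = 1)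
    (A B C : Finset V)
    (hAB : Disjoint A B) (hAC : Disjoint A C) (hBC : Disjoint B C)
    (hA : A.Nonempty) (hB : B.Nonempty) :
    CondIndep d p A B C ↔
      ∀ A' B' C' : Finset V, A' ⊆ A → B' ⊆ B → C' ⊆ C →
        A'.Nonempty → B'.Nonempty →
        ∀ x : Config V d, mll d p (A' ∪ B' ∪ C') (A ∪ B ∪ C) x = 0 :=
  condIndep_iff_mll_zero_general d p hpos A B C hAB hAC hBC
end

section
/- Let G be an acyclic directed mixed graph on a finite vertex set V, let x, y ∈ V and Z ⊆ V ∖ {x, y}. If some path π between x and y in G is not blocked by Z (i.e., π m-connects x and y given Z), then every vertex on π lies in an_G({x, y} ∪ Z). -/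
open Finset

open scoped Classical

variable {V : Type} [Fintype V] [DecidableEq V]

/-- An acyclic directed mixed graph (ADMG): directed edges `dir` and a symmetric
irreflexive set of bidirected edges `bi`, with no directed cycle. -/
structure ADMG (V : Type) [Fintype V] [DecidableEq V] where
  dir : V → V → Prop
  bi : V → V → Prop
  bi_symm : ∀ {v w}, bi v w → bi w v
  bi_irrefl : ∀ v, ¬ bi v v
  acyclic : ∀ v, ¬ Relation.TransGen dir v v

namespace ADMG

/-- Ancestors of (members of) `A`: vertices `w` with `w = a` or a directed path `w → ⋯ → a`
for some `a ∈ A`. -/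
noncomputable def anc (G : ADMG V) (A : Finset V) : Finset V :=
  univ.filter fun w => ∃ a ∈ A, Relation.ReflTransGen G.dir w a

/-- Descendants of (members of) `A`. -/
noncomputable def dec (G : ADMG V) (A : Finset V) : Finset V :=
  univ.filter fun w => ∃ a ∈ A, Relation.ReflTransGen G.dir a w

/-- Parents of (members of) `A`. -/
noncomputable def pa (G : ADMG V) (A : Finset V) : Finset V :=
  univ.filter fun w => ∃ a ∈ A, G.dir w a

/-- `barren_G(U)`: members of `U` with no non-trivial descendant in `U`. -/
noncomputable def barren (G : ADMG V) (U : Finset V) : Finset V :=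
  U.filter fun v => G.dec {v} ∩ U = {v}

/-- `U` is barren if `barren_G(U) = U`. -/
def IsBarren (G : ADMG V) (U : Finset V) : Prop := G.barren U = U

/-- One bidirected step inside the induced subgraph `G_S`. -/
def biStep (G : ADMG V) (S : Finset V) (u w : V) : Prop :=
  u ∈ S ∧ w ∈ S ∧ G.bi u w

/-- District of (members of) `A` in the induced subgraph `G_S`: vertices joined to a member
of `A` by a (possibly empty) bidirected path within `S`. -/
noncomputable def disIn (G : ADMG V) (S A : Finset V) : Finset V :=
  univ.filter fun w => ∃ a ∈ A, a ∈ S ∧ w ∈ S ∧ Relation.ReflTransGen (G.biStep S) a w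

/-- District in the whole graph. -/
noncomputable def dis (G : ADMG V) (A : Finset V) : Finset V := G.disIn univ A

/-- A head: a nonempty barren set connected by bidirected paths in `G_{an_G(H)}`. -/
def IsHead (G : ADMG V) (H : Finset V) : Prop :=
  H.Nonempty ∧ G.IsBarren H ∧
    ∀ a ∈ H, ∀ b ∈ H, Relation.ReflTransGen (G.biStep (G.anc H)) a b

/-- The tail of a head: `tail_G(H) = pa_G(D) ∪ (D ∖ H)` where `D = dis_{G_{an(H)}}(H)`. -/
noncomputable def tail (G : ADMG V) (H : Finset V) : Finset V :=
  G.pa (G.disIn (G.anc H) H) ∪ (G.disIn (G.anc H) H \ H)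

end ADMG

/-- `Gbar` is a head-preserving completion of `G`: a complete supergraph (on the same
vertices) in which every head of `G` is still a head. -/
def IsHPC (G Gbar : ADMG V) : Prop :=
  (∀ v w, G.dir v w → Gbar.dir v w) ∧
  (∀ v w, G.bi v w → Gbar.bi v w) ∧
  (∀ v w : V, v ≠ w → Gbar.dir v w ∨ Gbar.dir w v ∨ Gbar.bi v w) ∧
  (∀ H : Finset V, G.IsHead H → Gbar.IsHead H)

/-- Type of an edge on a path, read from left to right:
`u → w`, `u ← w`, or `u ↔ w`. -/
inductive EdgeType : Type
  | toRight
  | toLeft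
  | biE

/-- The edge of the given type is present in `G` between `u` (left) and `w` (right). -/
def edgeOK (G : ADMG V) : EdgeType → V → V → Prop
  | .toRight, u, w => G.dir u w
  | .toLeft,  u, w => G.dir w u
  | .biE,     u, w => G.bi u w

/-- The edge has an arrowhead at its right endpoint. -/
def arrowAtRight : EdgeType → Prop
  | .toRight => True
  | .toLeft  => False
  | .biE     => True

/-- The edge has an arrowhead at its left endpoint. -/
def arrowAtLeft : EdgeType → Prop
  | .toRight => False
  | .toLeft  => True
  | .biE     => True

/-- A path from `x` to `y` in the mixed graph `G`: distinct vertices `f 0, …, f n`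
joined by edges of the recorded types. -/
structure GPath (G : ADMG V) (x y : V) where
  n : ℕ
  f : Fin (n + 1) → V
  inj : Function.Injective f
  first : f 0 = x
  last : f (Fin.last n) = y
  e : Fin n → EdgeType
  ok : ∀ i : Fin n, edgeOK G (e i) (f i.castSucc) (f i.succ)

/-- The interior vertex `f (i+1)` is a collider on the path: both incident edges
have an arrowhead at it. -/
def GPath.colliderAt {G : ADMG V} {x y : V} (w : GPath G x y)
    (i : ℕ) (h : i + 1 < w.n) : Prop :=
  arrowAtRight (w.e ⟨i, by omega⟩) ∧ arrowAtLeft (w.e ⟨i + 1, h⟩)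

/-- The path is blocked by `C`: some interior non-collider is in `C`, or some interior
collider is outside `an_G(C)`. -/
def GPath.Blocked {G : ADMG V} {x y : V} (w : GPath G x y) (C : Finset V) : Prop :=
  ∃ (i : ℕ) (h : i + 1 < w.n),
    (¬ w.colliderAt i h ∧ w.f ⟨i + 1, by omega⟩ ∈ C) ∨
    (w.colliderAt i h ∧ w.f ⟨i + 1, by omega⟩ ∉ G.anc C)

/-- m-separation of `A` and `B` given `C` in `G`. -/
def MSep (G : ADMG V) (A B C : Finset V) : Prop :=
  ∀ a ∈ A, ∀ b ∈ B, ∀ w : GPath G a b, w.Blocked C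

/-!
Call a set of vertices ancestral if it contains the parents of its members, and let `T` be an
ancestral set containing both endpoints and every collider of a path. Walking along the path in
the direction of an arrowhead, each vertex reached is a collider, the last endpoint, or the tail
of an edge pointing further on, so by induction it lies in `T`. Every vertex is reached in this
way: unless it is the last one, the edge to its right either has an arrowhead at it (walk
leftwards) or is an edge `→` into its right neighbour (walk rightwards). For an unblocked path,
`an_G({x, y} ∪ Z)` is such a `T`, since its colliders lie in `an_G(Z)`.
-/

namespace ADMG

def IsAncestral (G : ADMG V) (T : Set V) : Prop :=
  ∀ u v, G.dir u v → v ∈ T → u ∈ T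

variable {G : ADMG V}

lemma mem_anc_iff {A : Finset V} {v : V} :
    v ∈ G.anc A ↔ ∃ a ∈ A, Relation.ReflTransGen G.dir v a := by
  simp [anc]

lemma subset_anc {A : Finset V} : A ⊆ G.anc A :=
  fun v hv => mem_anc_iff.2 ⟨v, hv, .refl⟩

lemma anc_mono {A B : Finset V} (h : A ⊆ B) : G.anc A ⊆ G.anc B := fun v hv => by
  obtain ⟨a, ha, hva⟩ := mem_anc_iff.1 hv
  exact mem_anc_iff.2 ⟨a, h ha, hva⟩

lemma isAncestral_anc (A : Finset V) : G.IsAncestral (G.anc A) := fun _ _ huv hv => by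
  obtain ⟨a, ha, hva⟩ := mem_anc_iff.1 hv
  exact mem_anc_iff.2 ⟨a, ha, .head huv hva⟩

end ADMG

lemma arrowAtRight_of_not_arrowAtLeft {t : EdgeType} (h : ¬ arrowAtLeft t) : arrowAtRight t := by
  cases t <;> simp_all [arrowAtLeft, arrowAtRight]

lemma arrowAtLeft_of_not_arrowAtRight {t : EdgeType} (h : ¬ arrowAtRight t) : arrowAtLeft t := by
  cases t <;> simp_all [arrowAtLeft, arrowAtRight]

namespace GPath

variable {G : ADMG V} {x y : V} (w : GPath G x y)

lemma dir_of_not_arrowAtLeft {i : Fin w.n} (h : ¬ arrowAtLeft (w.e i)) :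
    G.dir (w.f i.castSucc) (w.f i.succ) := by
  have hok := w.ok i
  cases hi : w.e i <;> simp_all [arrowAtLeft, edgeOK]

lemma dir_of_not_arrowAtRight {i : Fin w.n} (h : ¬ arrowAtRight (w.e i)) :
    G.dir (w.f i.succ) (w.f i.castSucc) := by
  have hok := w.ok i
  cases hi : w.e i <;> simp_all [arrowAtRight, edgeOK]

lemma f_succ_mem_of_arrowAtRight {T : Set V} (hT : G.IsAncestral T)
    (hcol : ∀ i (h : i + 1 < w.n), w.colliderAt i h → w.f ⟨i + 1, by omega⟩ ∈ T)
    (hy : y ∈ T) (i : Fin w.n) (hi : arrowAtRight (w.e i)) : w.f i.succ ∈ T := by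
  by_cases hlast : i.val + 1 = w.n
  · rw [show i.succ = Fin.last w.n from Fin.ext hlast, w.last]
    exact hy
  have hnext : i.val + 1 < w.n := by omega
  by_cases hL : arrowAtLeft (w.e ⟨i + 1, hnext⟩)
  · exact hcol i hnext ⟨hi, hL⟩
  · exact hT _ _ (w.dir_of_not_arrowAtLeft hL) <|
      f_succ_mem_of_arrowAtRight hT hcol hy ⟨i + 1, hnext⟩ (arrowAtRight_of_not_arrowAtLeft hL)
termination_by w.n - i

lemma f_castSucc_mem_of_arrowAtLeft {T : Set V} (hT : G.IsAncestral T)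
    (hcol : ∀ i (h : i + 1 < w.n), w.colliderAt i h → w.f ⟨i + 1, by omega⟩ ∈ T)
    (hx : x ∈ T) : ∀ i : Fin w.n, arrowAtLeft (w.e i) → w.f i.castSucc ∈ T
  | ⟨0, h0⟩, _ => by
    rw [show (⟨0, h0⟩ : Fin w.n).castSucc = 0 from rfl, w.first]
    exact hx
  | ⟨k + 1, hk⟩, hi => by
    by_cases hR : arrowAtRight (w.e ⟨k, by omega⟩)
    · exact hcol k hk ⟨hR, hi⟩
    · exact hT _ _ (w.dir_of_not_arrowAtRight hR) <|
        f_castSucc_mem_of_arrowAtLeft hT hcol hx ⟨k, by omega⟩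
          (arrowAtLeft_of_not_arrowAtRight hR)

lemma f_mem_of_isAncestral {T : Set V} (hT : G.IsAncestral T)
    (hcol : ∀ i (h : i + 1 < w.n), w.colliderAt i h → w.f ⟨i + 1, by omega⟩ ∈ T)
    (hx : x ∈ T) (hy : y ∈ T) (j : Fin (w.n + 1)) : w.f j ∈ T := by
  induction j using Fin.lastCases with
  | last =>
    rw [w.last]
    exact hy
  | cast i =>
    by_cases hL : arrowAtLeft (w.e i)
    · exact w.f_castSucc_mem_of_arrowAtLeft hT hcol hx i hL
    · exact hT _ _ (w.dir_of_not_arrowAtLeft hL) <|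
        w.f_succ_mem_of_arrowAtRight hT hcol hy i (arrowAtRight_of_not_arrowAtLeft hL)

lemma f_succ_mem_anc_of_colliderAt {C : Finset V} (hnb : ¬ w.Blocked C) {i : ℕ}
    (h : i + 1 < w.n) (hc : w.colliderAt i h) : w.f ⟨i + 1, by omega⟩ ∈ G.anc C := by
  by_contra hnot
  exact hnb ⟨i, h, .inr ⟨hc, hnot⟩⟩

end GPath

theorem mConnecting_path_in_ancestors_general (G : ADMG V) (x y : V) (Z : Finset V)
    (w : GPath G x y) (hnb : ¬ w.Blocked Z) :
    ∀ i : Fin (w.n + 1), w.f i ∈ G.anc ({x, y} ∪ Z) :=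
  w.f_mem_of_isAncestral (T := G.anc ({x, y} ∪ Z))
    (ADMG.isAncestral_anc _)
    (fun _ h hc => ADMG.anc_mono subset_union_right
      (w.f_succ_mem_anc_of_colliderAt hnb h hc))
    (ADMG.subset_anc (by simp)) (ADMG.subset_anc (by simp))

/-- if a path between `x` and `y` is not blocked by `Z ⊆ V ∖ {x, y}`
(i.e. it m-connects `x` and `y` given `Z`), then every vertex on it lies in
`an_G({x, y} ∪ Z)`. -/
theorem mConnecting_path_in_ancestors (G : ADMG V) (x y : V) (Z : Finset V)
    (hx : x ∉ Z) (hy : y ∉ Z) (w : GPath G x y) (hnb : ¬ w.Blocked Z) :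
    ∀ i : Fin (w.n + 1), w.f i ∈ G.anc ({x, y} ∪ Z) :=
  mConnecting_path_in_ancestors_general G x y Z w hnb
end

section
/- Let G be an acyclic directed mixed graph and let H_i ≠ H_j be two distinct heads of G with tails T_i = tail_G(H_i) and T_j = tail_G(H_j). Then there is no set A with both H_i ⊆ A ⊆ H_i ∪ T_i and H_j ⊆ A ⊆ H_j ∪ T_j; that is, the collections of effects {A : H_i ⊆ A ⊆ H_i ∪ T_i} and {A : H_j ⊆ A ⊆ H_j ∪ T_j} are disjoint. -/
open Finset

open scoped Classical

variable {V : Type} [Fintype V] [DecidableEq V]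

/-!
Every vertex of `tail_G(H)` is a proper ancestor of some vertex of `H`: parents of the district
`D ⊆ an_G(H)` trivially, and vertices of `D ∖ H` because they are ancestors of `H` outside `H`.
Hence for any effect `H ⊆ A ⊆ H ∪ tail_G(H)` the tail vertices of `A` are not barren in `A`,
while `H`, being barren, has no proper descendant in `A` at all (acyclicity). So `H = barren_G(A)`
is determined by `A`, and two heads sharing an effect coincide.
-/

namespace ADMG

variable (G : ADMG V)

@[simp]
lemma mem_dec_singleton {v w : V} : w ∈ G.dec {v} ↔ Relation.ReflTransGen G.dir v w := by
  simp [dec]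

lemma mem_barren {U : Finset V} {v : V} :
    v ∈ G.barren U ↔ v ∈ U ∧ ∀ w ∈ U, Relation.ReflTransGen G.dir v w → w = v := by
  simp only [barren, mem_filter, eq_singleton_iff_unique_mem, mem_inter, mem_dec_singleton]
  exact and_congr_right fun hv => ⟨fun h w hw hvw => h.2 w ⟨hvw, hw⟩,
    fun h => ⟨⟨.refl, hv⟩, fun w hw => h w hw.2 hw.1⟩⟩

lemma exists_transGen_of_mem_tail {H : Finset V} {t : V} (ht : t ∈ G.tail H) :
    ∃ h ∈ H, Relation.TransGen G.dir t h := by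
  simp only [tail, pa, disIn, anc, mem_union, mem_sdiff, mem_filter, mem_univ, true_and] at ht
  rcases ht with ⟨d, ⟨-, -, -, ⟨h, hh, hdh⟩, -⟩, htd⟩ | ⟨⟨-, -, -, ⟨h, hh, hth⟩, -⟩, htH⟩
  · exact ⟨h, hh, .head' htd hdh⟩
  · rcases Relation.reflTransGen_iff_eq_or_transGen.mp hth with rfl | hth
    · exact absurd hh htH
    · exact ⟨h, hh, hth⟩

lemma barren_eq_of_forall_transGen {H A : Finset V} (hH : G.IsBarren H) (hHA : H ⊆ A)
    (hA : ∀ a ∈ A, a ∉ H → ∃ h ∈ H, Relation.TransGen G.dir a h) : G.barren A = H := by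
  have hbarren : ∀ v ∈ H, ∀ w ∈ H, Relation.ReflTransGen G.dir v w → w = v := fun v hv =>
    ((G.mem_barren.mp (hH.symm ▸ hv : v ∈ G.barren H)).2)
  ext v
  rw [mem_barren]
  constructor
  · rintro ⟨hvA, hv⟩
    by_contra hvH
    obtain ⟨h, hh, hvh⟩ := hA v hvA hvH
    exact G.acyclic v (hv h (hHA hh) hvh.to_reflTransGen ▸ hvh)
  · refine fun hvH => ⟨hHA hvH, fun w hwA hvw => ?_⟩
    by_cases hwH : w ∈ H
    · exact hbarren v hvH w hwH hvw
    · obtain ⟨h, hh, hwh⟩ := hA w hwA hwH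
      have hvh : Relation.TransGen G.dir v h := .trans_right hvw hwh
      exact absurd (hbarren v hvH h hh hvh.to_reflTransGen ▸ hvh) (G.acyclic v)

lemma barren_eq_of_subset_union_tail {H A : Finset V} (hH : G.IsBarren H) (hHA : H ⊆ A)
    (hAT : A ⊆ H ∪ G.tail H) : G.barren A = H :=
  G.barren_eq_of_forall_transGen hH hHA fun _ ha haH =>
    G.exists_transGen_of_mem_tail ((mem_union.mp (hAT ha)).resolve_left haH)

end ADMG

/-- for distinct heads `H_i ≠ H_j`, no set `A` satisfies both
`H_i ⊆ A ⊆ H_i ∪ T_i` and `H_j ⊆ A ⊆ H_j ∪ T_j`; the effect collections are disjoint. -/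
theorem effects_disjoint (G : ADMG V) (Hi Hj : Finset V)
    (hi : G.IsHead Hi) (hj : G.IsHead Hj) (hne : Hi ≠ Hj) :
    ¬ ∃ A : Finset V,
        Hi ⊆ A ∧ A ⊆ Hi ∪ G.tail Hi ∧ Hj ⊆ A ∧ A ⊆ Hj ∪ G.tail Hj := by
  rintro ⟨A, hiA, hiT, hjA, hjT⟩
  exact hne <| (G.barren_eq_of_subset_union_tail hi.2.1 hiA hiT).symm.trans
    (G.barren_eq_of_subset_union_tail hj.2.1 hjA hjT)
end

section
/- Let V be a finite index set with finite state spaces X_v of size at least 2, p a strictly positive probability distribution on X_V, and L ⊆ M ⊆ V with N = M ∖ L. Define κ_{L|N}(x_L | x_N) = ∑_{A : L ⊆ A ⊆ M} λ_A^M(x_A). Then κ_{L|N}(x_L | x_N) = |X_L|^{-1} ∑_{y_M ∈ X_M, y_N = x_N} log p_M(y_M) · ∏_{v∈L} (|X_v|·1[x_v = y_v] − 1). -/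
open Finset

open scoped Classical

variable {V : Type} [Fintype V] [DecidableEq V]

lemma sum_filter_superset_prod {α : Type*} [DecidableEq α] (L M : Finset α)
    (hLM : L ⊆ M) (t : α → ℝ) :
    ∑ A ∈ M.powerset.filter (fun A => L ⊆ A), ∏ v ∈ A, t v
      = (∏ v ∈ L, t v) * ∏ v ∈ M \ L, (t v + 1) := by
  rw [Finset.prod_add, Finset.mul_sum]
  simp only [Finset.prod_const_one, mul_one]
  refine Finset.sum_nbij' (i := fun A => A \ L) (j := fun B => L ∪ B) ?_ ?_ ?_ ?_ ?_
  · intro A hA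
    simp only [Finset.mem_filter, Finset.mem_powerset] at hA ⊢
    exact Finset.sdiff_subset_sdiff hA.1 le_rfl
  · intro B hB
    simp only [Finset.mem_powerset] at hB
    simp only [Finset.mem_filter, Finset.mem_powerset]
    exact ⟨Finset.union_subset hLM (hB.trans (Finset.sdiff_subset)), Finset.subset_union_left⟩
  · intro A hA
    simp only [Finset.mem_filter, Finset.mem_powerset] at hA
    exact Finset.union_sdiff_of_subset hA.2
  · intro B hB
    simp only [Finset.mem_powerset] at hB
    exact Finset.union_sdiff_cancel_left (Finset.disjoint_left.2
      fun a ha hb => (Finset.mem_sdiff.1 (hB hb)).2 ha)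
  · intro A hA
    simp only [Finset.mem_filter, Finset.mem_powerset] at hA
    rw [← Finset.prod_sdiff hA.2, mul_comm]

/-- the partial sum `κ_{L|N}(x_L | x_N) = ∑_{L ⊆ A ⊆ M} λ_A^M(x_A)`
equals `|X_L|⁻¹ ∑_{y_M : y_N = x_N} log p_M(y_M) ∏_{v ∈ L} (|X_v|·1[x_v = y_v] − 1)`,
where `N = M ∖ L`.  (The sum over `y_M` with `y_N = x_N` is realized by summing over
full configurations that are `0` outside `M` and agree with `x` on `N`.) -/
theorem kappa_formula (d : V → ℕ) (p : Config V d → ℝ)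
    (hpos : ∀ x, 0 < p x) (hsum : ∑ x, p x = 1)
    (L M : Finset V) (hLM : L ⊆ M) (x : Config V d) :
    (∑ A ∈ M.powerset.filter (fun A => L ⊆ A), mll d p A M x)
      = (∏ v ∈ L, ((d v + 2 : ℕ) : ℝ))⁻¹ *
          ∑ y : Config V d,
            if (∀ v ∉ M, y v = 0) ∧ (∀ v ∈ M \ L, y v = x v) then
              Real.log (margin d p M y) *
                ∏ v ∈ L, (((d v + 2 : ℕ) : ℝ) * (if x v = y v then 1 else 0) - 1)
            else 0 := by
  classical
  unfold mll
  rw [← Finset.mul_sum, Finset.sum_comm]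
  have hstep : ∀ y : Config V d,
      (∑ A ∈ M.powerset.filter (fun A => L ⊆ A),
        if ∀ v ∉ M, y v = 0 then
          Real.log (margin d p M y) *
            ∏ v ∈ A, (((d v + 2 : ℕ) : ℝ) * (if x v = y v then 1 else 0) - 1)
        else 0)
      = (∏ v ∈ M \ L, ((d v + 2 : ℕ) : ℝ)) *
        (if (∀ v ∉ M, y v = 0) ∧ (∀ v ∈ M \ L, y v = x v) then
          Real.log (margin d p M y) *
            ∏ v ∈ L, (((d v + 2 : ℕ) : ℝ) * (if x v = y v then 1 else 0) - 1)
        else 0) := by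
    intro y
    by_cases h0 : ∀ v ∉ M, y v = 0
    · rw [Finset.sum_congr rfl (fun A _ => if_pos h0)]
      rw [← Finset.mul_sum, sum_filter_superset_prod L M hLM]
      have h1 : ∀ v, (((d v + 2 : ℕ) : ℝ) * (if x v = y v then 1 else 0) - 1) + 1
          = ((d v + 2 : ℕ) : ℝ) * (if x v = y v then 1 else 0) := by
        intro v; ring
      simp only [h1]
      rw [Finset.prod_mul_distrib, Finset.prod_boole]
      have h2 : (∀ v ∈ M \ L, x v = y v) ↔ (∀ v ∈ M \ L, y v = x v) := by
        constructor <;> intro h v hv <;> exact (h v hv).symm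
      by_cases h3 : ∀ v ∈ M \ L, y v = x v
      · rw [if_pos (h2.2 h3), if_pos ⟨h0, h3⟩]
        ring
      · rw [if_neg (fun hc => h3 (h2.1 hc)), if_neg (fun hc => h3 hc.2)]
        ring
    · rw [Finset.sum_congr rfl (fun A _ => if_neg h0), Finset.sum_const_zero,
        if_neg (fun hc => h0 hc.1), mul_zero]
  simp only [hstep]
  rw [← Finset.mul_sum, ← mul_assoc]
  congr 1
  rw [← Finset.prod_sdiff hLM]
  have hL : (∏ v ∈ L, ((d v + 2 : ℕ) : ℝ)) ≠ 0 :=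
    Finset.prod_ne_zero_iff.2 fun v _ => by positivity
  have hN : (∏ v ∈ M \ L, ((d v + 2 : ℕ) : ℝ)) ≠ 0 :=
    Finset.prod_ne_zero_iff.2 fun v _ => by positivity
  field_simp
end
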